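/- arXiv:1205.2205 — 6 statements merged into one kernel-verified Lean document; each statement's English description precedes it below -/
import Mathlib

section
/- For every finite simple graph G = (V, E), all natural numbers x, y with y ≤ x, and every element z of a commutative ring, the trivariate chromatic polynomial satisfies P̃(G, x, y, z) = Σ_{W ⊆ V} (x − y)^{|W|} · χ̃(G − W, y, z), where G − W denotes the subgraph of G induced by V \ W (i.e. the graph obtained by deleting the vertices of W together with their incident edges), and (x − y)^{|W|} is interpreted as the natural number (x − y)^{|W|} cast into the ring. -/
open Finset

/-- The edge set of a simple graph on a finite vertex type, as a `Finset`. -/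
noncomputable def edgeFinset' {α : Type*} [Fintype α] (G : SimpleGraph α) :
    Finset (Sym2 α) :=
  (Set.toFinite G.edgeSet).toFinset

/-- The number of connected components of a graph. -/
noncomputable def ncomp {α : Type*} (G : SimpleGraph α) : ℕ :=
  Nat.card G.ConnectedComponent

/-- The Potts model `Z(G, x, y) = Σ_{A ⊆ E} x^{c(V,A)} y^{|A|}`, where `c(V,A)` is the
number of connected components of the spanning subgraph `(V, A)`. -/
noncomputable def potts {α : Type*} [Fintype α] {R : Type*} [CommRing R]
    (G : SimpleGraph α) (x y : R) : R :=
  ∑ A ∈ (edgeFinset' G).powerset,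
    x ^ ncomp (SimpleGraph.fromEdgeSet (A : Set (Sym2 α))) * y ^ A.card

/-- The subgraph counting polynomial
`H(G, v, x, y) = Σ_{(W,F), W ⊆ V, F ⊆ E(G[W])} v^{|W|} x^{c(W,F)} y^{|F|}`,
where `c(W,F)` is the number of connected components of the graph `(W, F)`. -/
noncomputable def scp {α : Type*} [Fintype α] {R : Type*} [CommRing R]
    (G : SimpleGraph α) (v x y : R) : R :=
  ∑ W : Finset α, ∑ F ∈ (edgeFinset' (G.induce (W : Set α))).powerset,
    v ^ W.card * x ^ ncomp (SimpleGraph.fromEdgeSet (F : Set (Sym2 (W : Set α)))) * y ^ F.card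

/-- The subgraph component polynomial `Q(G, v, x) = Σ_{W ⊆ V} v^{|W|} x^{k(G[W])}`. -/
noncomputable def subgraphCompPoly {α : Type*} [Fintype α] {R : Type*} [CommRing R]
    (G : SimpleGraph α) (v x : R) : R :=
  ∑ W : Finset α, v ^ W.card * x ^ ncomp (G.induce (W : Set α))

/-- The number of bad monochromatic edges of a coloring `φ : α → Fin x` (colors `1, …, x`
identified with `Fin x` via `c ↦ c + 1`): edges all of whose vertices get the same color
`c ≤ y`, i.e. `(c : ℕ) < y`. -/
noncomputable def badCount {α : Type*} {x : ℕ} (G : SimpleGraph α) (y : ℕ)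
    (φ : α → Fin x) : ℕ :=
  {e ∈ G.edgeSet | ∃ c : Fin x, (c : ℕ) < y ∧ ∀ w ∈ e, φ w = c}.ncard

/-- The number of monochromatic edges of a coloring `φ : α → Fin x`. -/
noncomputable def monoCount {α : Type*} {x : ℕ} (G : SimpleGraph α)
    (φ : α → Fin x) : ℕ :=
  {e ∈ G.edgeSet | ∃ c : Fin x, ∀ w ∈ e, φ w = c}.ncard

/-- The bad coloring polynomial `χ̃(G, x, z) = Σ_{φ : V → {1,…,x}} z^{m(φ)}`, where `m(φ)`
is the number of monochromatic edges of `φ`. -/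
noncomputable def badChrom {α : Type*} [Fintype α] [DecidableEq α] {R : Type*} [CommRing R]
    (G : SimpleGraph α) (x : ℕ) (z : R) : R :=
  ∑ φ : α → Fin x, z ^ monoCount G φ

/-- The trivariate chromatic polynomial `P̃(G, x, y, z) = Σ_{φ : V → {1,…,x}} z^{b(φ)}`,
where `b(φ)` is the number of bad monochromatic edges of `φ` (monochromatic in a color
`c ≤ y`). -/
noncomputable def triChrom {α : Type*} [Fintype α] [DecidableEq α] {R : Type*} [CommRing R]
    (G : SimpleGraph α) (x y : ℕ) (z : R) : R :=
  ∑ φ : α → Fin x, z ^ badCount G y φ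

/-- The subgraph counting polynomial as a polynomial with integer coefficients in the
variables `v = X 0`, `x = X 1`, `y = X 2`. -/
noncomputable def scpPoly {α : Type*} [Fintype α] (G : SimpleGraph α) :
    MvPolynomial (Fin 3) ℤ :=
  scp G (MvPolynomial.X 0) (MvPolynomial.X 1) (MvPolynomial.X 2)

/-!
Sort the colors `0, …, x - 1` into the `y` "bad" colors `c < y` and the `x - y` others. A
coloring `φ` is then the same as the set `W` of vertices with a color `≥ y`, an arbitrary
coloring of `W` by the `x - y` other colors, and a coloring `ψ` of `V \ W` by the bad
colors. Since only bad colors make an edge bad, the bad edges of `φ` are exactly the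
monochromatic edges of `ψ` in `G - W`; summing over the colorings of `W` gives the factor
`(x - y) ^ |W|`.
-/

theorem badCount_eq_monoCount_induce {V : Type*} {x y : ℕ} (G : SimpleGraph V)
    {φ : V → Fin x} {T : Set V} (ψ : T → Fin y) (hψ : ∀ v : T, (ψ v : ℕ) = φ v)
    (hT : ∀ v ∉ T, y ≤ φ v) :
    badCount G y φ = monoCount (G.induce T) ψ := by
  rw [badCount, monoCount,
    ← Set.ncard_image_of_injective _ (Sym2.map.injective Subtype.val_injective)]
  congr 1
  ext e
  constructor
  · rintro ⟨he, c, hc, hmono⟩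
    induction e using Sym2.ind with
    | _ a b =>
      rw [Sym2.forall_mem_pair] at hmono
      have mem_of_eq_c : ∀ v, φ v = c → v ∈ T := fun v hv =>
        by_contra fun hvT => by have := hT v hvT; omega
      refine ⟨s(⟨a, mem_of_eq_c a hmono.1⟩, ⟨b, mem_of_eq_c b hmono.2⟩), ⟨he, ⟨c, hc⟩, ?_⟩, rfl⟩
      simp [Fin.ext_iff, hψ, hmono]
  · rintro ⟨e, ⟨he, c, hmono⟩, rfl⟩
    induction e using Sym2.ind with
    | _ a b =>
      rw [Sym2.forall_mem_pair] at hmono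
      refine ⟨he, φ a, by rw [← hψ, hmono.1]; exact c.isLt, ?_⟩
      simp [Fin.ext_iff, ← hψ, hmono]

section SplitColoring

variable {V : Type*} [Fintype V] [DecidableEq V] {y k : ℕ}

variable (V y k) in
abbrev SplitColoring : Type _ :=
  Σ W : Finset V, (W → Fin k) × (((Wᶜ : Finset V) : Set V) → Fin y)

def glueColoring (s : SplitColoring V y k) (v : V) : Fin (y + k) :=
  if h : v ∈ s.1 then Fin.natAdd y (s.2.1 ⟨v, h⟩) else Fin.castAdd k (s.2.2 ⟨v, by simpa⟩)

theorem le_glueColoring_iff (s : SplitColoring V y k) (v : V) :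
    y ≤ (glueColoring s v : ℕ) ↔ v ∈ s.1 := by
  unfold glueColoring
  split_ifs with h <;> simp [h]

theorem glueColoring_bijective :
    Function.Bijective (glueColoring : SplitColoring V y k → V → Fin (y + k)) := by
  constructor
  · rintro ⟨W, p, q⟩ ⟨W', p', q'⟩ h
    obtain rfl : W = W' := by
      ext v
      rw [← le_glueColoring_iff ⟨W, p, q⟩, h, le_glueColoring_iff]
    have hv := fun v => congrFun h v
    simp only [glueColoring] at hv
    congr
    · funext ⟨v, hvW⟩
      simpa [hvW] using hv v
    · funext ⟨v, hvW⟩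
      have hvW : v ∉ W := by simpa using hvW
      simpa [hvW] using hv v
  · intro φ
    refine ⟨⟨({v | y ≤ (φ v : ℕ)} : Finset V), fun v => ⟨φ v - y, ?_⟩, fun v => ⟨φ v, ?_⟩⟩, ?_⟩
    · have := (φ v).isLt; have := (Finset.mem_filter.1 v.2).2; omega
    · simpa using v.2
    · ext v
      by_cases hv : y ≤ (φ v : ℕ) <;> simp [glueColoring, hv]

theorem badCount_glueColoring (G : SimpleGraph V) (W : Finset V) (p : W → Fin k)
    (q : ((Wᶜ : Finset V) : Set V) → Fin y) :
    badCount G y (glueColoring ⟨W, p, q⟩) =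
      monoCount (G.induce ((Wᶜ : Finset V) : Set V)) q := by
  refine badCount_eq_monoCount_induce G q (fun v => ?_) (fun v hv => ?_)
  · have hv : (v : V) ∉ W := by simpa using v.2
    simp [glueColoring, hv]
  · exact (le_glueColoring_iff _ v).2 (by simpa using hv)

end SplitColoring

/-- `P̃(G, x, y, z) = Σ_{W ⊆ V} (x − y)^{|W|} · χ̃(G − W, y, z)`, where
`G − W` is the subgraph induced by `V \\ W`. -/
theorem triChrom_eq_sum_badChrom {V : Type*} [Fintype V] [DecidableEq V] {R : Type*}
    [CommRing R] (G : SimpleGraph V) (x y : ℕ) (hxy : y ≤ x) (z : R) :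
    triChrom G x y z
      = ∑ W : Finset V,
          (((x - y) ^ W.card : ℕ) : R) * badChrom (G.induce ((Wᶜ : Finset V) : Set V)) y z := by
  obtain ⟨k, rfl⟩ := Nat.exists_eq_add_of_le hxy
  rw [triChrom, ← Fintype.sum_bijective _ glueColoring_bijective _ _ fun _ => rfl,
    Fintype.sum_sigma]
  refine Finset.sum_congr rfl fun W _ => ?_
  simp only [Fintype.sum_prod_type, badCount_glueColoring, Finset.sum_const, Finset.card_univ,
    Fintype.card_fun, Fintype.card_coe, Fintype.card_fin, Nat.add_sub_cancel_left, badChrom,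
    nsmul_eq_mul]
end

section
/- For every finite simple graph G = (V, E), all natural numbers x, y with y ≤ x, and every element z of a commutative ring, the trivariate chromatic polynomial has the expansion P̃(G, x, y, z) = Σ_{W ⊆ V} (x − y)^{|W|} · Σ_{A ⊆ E(G − W)} y^{c(A)} (z − 1)^{|A|}, where G − W is the subgraph of G induced by V \ W, E(G − W) is its edge set, c(A) is the number of connected components of the spanning subgraph (V \ W, A), and the natural numbers (x − y)^{|W|} and y^{c(A)} are cast into the ring. -/
open Finset

lemma ncard_sep {α : Type*} [Fintype α] (G : SimpleGraph α) (P : Sym2 α → Prop)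
    [DecidablePred P] :
    {e ∈ G.edgeSet | P e}.ncard = ((edgeFinset' G).filter P).card := by
  have h : {e ∈ G.edgeSet | P e} = ↑((edgeFinset' G).filter P) := by
    ext e
    simp only [Set.mem_setOf_eq, Finset.coe_filter, edgeFinset', Set.Finite.mem_toFinset]
  rw [h, Set.ncard_coe_finset]

lemma walk_const {β γ : Type*} {H : SimpleGraph β} {ψ : β → γ}
    (hψ : ∀ u v, H.Adj u v → ψ u = ψ v) {u v : β} (p : H.Walk u v) : ψ u = ψ v := by
  induction p with
  | nil => rfl
  | cons h _ ih => exact (hψ _ _ h).trans ih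

noncomputable def compEquiv {β γ : Type*} (H : SimpleGraph β) :
    {ψ : β → γ // ∀ u v, H.Adj u v → ψ u = ψ v} ≃ (H.ConnectedComponent → γ) where
  toFun ψ := SimpleGraph.ConnectedComponent.lift ψ.1 (fun _ _ p _ => walk_const ψ.2 p)
  invFun g := ⟨fun v => g (H.connectedComponentMk v), fun u v h =>
    congrArg g ((SimpleGraph.ConnectedComponent.eq).mpr h.reachable)⟩
  left_inv ψ := by ext v; rfl
  right_inv g := by
    funext c
    induction c using SimpleGraph.ConnectedComponent.ind
    rfl

lemma card_mono_colorings {β : Type*} [Fintype β] [DecidableEq β] (y : ℕ)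
    (A : Finset (Sym2 β))
    [DecidablePred fun ψ : β → Fin y => ∀ e ∈ A, ∃ c, ∀ w ∈ e, ψ w = c] :
    (Finset.univ.filter
      (fun ψ : β → Fin y => ∀ e ∈ A, ∃ c, ∀ w ∈ e, ψ w = c)).card
      = y ^ ncomp (SimpleGraph.fromEdgeSet (A : Set (Sym2 β))) := by
  classical
  set H := SimpleGraph.fromEdgeSet (A : Set (Sym2 β)) with hH
  have hcond : ∀ ψ : β → Fin y,
      (∀ e ∈ A, ∃ c, ∀ w ∈ e, ψ w = c) ↔ (∀ u v, H.Adj u v → ψ u = ψ v) := by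
    intro ψ
    constructor
    · rintro h u v ⟨he, -⟩
      obtain ⟨c, hc⟩ := h _ he
      rw [hc u (by simp), hc v (by simp)]
    · intro h e he
      induction e with
      | h u v =>
        refine ⟨ψ u, ?_⟩
        intro w hw
        rcases Sym2.mem_iff.mp hw with rfl | rfl
        · rfl
        · by_cases huv : u = w
          · rw [huv]
          · exact (h u w ⟨he, huv⟩).symm
  rw [Finset.filter_congr (fun ψ _ => hcond ψ)]
  rw [← Fintype.card_subtype]
  letI : Fintype H.ConnectedComponent := Fintype.ofFinite _
  rw [Fintype.card_congr (compEquiv H), Fintype.card_fun, Fintype.card_fin,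
    ncomp, Nat.card_eq_fintype_card]


lemma badChrom_eq {β : Type*} [Fintype β] [DecidableEq β] {R : Type*} [CommRing R]
    (H : SimpleGraph β) (y : ℕ) (z : R) :
    badChrom H y z = ∑ A ∈ (edgeFinset' H).powerset,
      ((y ^ ncomp (SimpleGraph.fromEdgeSet (A : Set (Sym2 β))) : ℕ) : R) * (z - 1) ^ A.card := by
  have h1 : ∀ ψ : β → Fin y, monoCount H ψ
      = ((edgeFinset' H).filter (fun e => ∃ c, ∀ w ∈ e, ψ w = c)).card := by
    intro ψ
    have := ncard_sep H (fun e => ∃ c, ∀ w ∈ e, ψ w = c)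
    exact this
  have hpow : ∀ (M : Finset (Sym2 β)), M ⊆ edgeFinset' H →
      M.powerset = (edgeFinset' H).powerset.filter (· ⊆ M) := by
    intro M hME
    ext t
    simp only [mem_powerset, mem_filter]
    exact ⟨fun h => ⟨h.trans hME, h⟩, fun h => h.2⟩
  have h2 : ∀ ψ : β → Fin y, z ^ monoCount H ψ
      = ∑ A ∈ (edgeFinset' H).powerset,
          (if A ⊆ (edgeFinset' H).filter (fun e => ∃ c, ∀ w ∈ e, ψ w = c)
            then (z - 1) ^ A.card else 0) := by
    intro ψ
    rw [h1]
    set M := (edgeFinset' H).filter (fun e => ∃ c, ∀ w ∈ e, ψ w = c) with hM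
    have : z ^ M.card = ∏ _e ∈ M, ((z - 1) + 1) := by
      simp [Finset.prod_const]
    rw [this, Finset.prod_add]
    rw [← Finset.sum_filter, ← hpow M (Finset.filter_subset _ _)]
    exact Finset.sum_congr rfl (fun t _ => by simp)
  unfold badChrom
  simp_rw [h2]
  rw [Finset.sum_comm]
  refine Finset.sum_congr rfl (fun A hA => ?_)
  have hAE : A ⊆ edgeFinset' H := Finset.mem_powerset.mp hA
  have hcond : ∀ ψ : β → Fin y,
      (A ⊆ (edgeFinset' H).filter (fun e => ∃ c, ∀ w ∈ e, ψ w = c))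
        ↔ (∀ e ∈ A, ∃ c, ∀ w ∈ e, ψ w = c) := by
    intro ψ
    constructor
    · intro h e he
      exact (Finset.mem_filter.mp (h he)).2
    · intro h e he
      exact Finset.mem_filter.mpr ⟨hAE he, h e he⟩
  simp_rw [← Finset.sum_filter, Finset.sum_const, Finset.filter_congr (fun ψ _ => hcond ψ)]
  rw [card_mono_colorings, nsmul_eq_mul]

lemma badCount_eq_monoCount {V : Type*} (G : SimpleGraph V) {x y : ℕ} (hxy : y ≤ x)
    (φ : V → Fin x) (s : Set V) (hs : ∀ v, v ∈ s ↔ (φ v : ℕ) < y)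
    (ψ : s → Fin y) (hψ : ∀ v : s, (ψ v : ℕ) = (φ ↑v : ℕ)) :
    badCount G y φ = monoCount (G.induce s) ψ := by
  have hinj : Function.Injective (Sym2.map (Subtype.val : s → V)) :=
    Sym2.map.injective Subtype.val_injective
  have hset : {e ∈ G.edgeSet | ∃ c : Fin x, (c : ℕ) < y ∧ ∀ w ∈ e, φ w = c}
      = Sym2.map (Subtype.val : s → V) ''
        {e ∈ (G.induce s).edgeSet | ∃ c : Fin y, ∀ w ∈ e, ψ w = c} := by
    ext e
    constructor
    · rintro ⟨he, c, hc, hmono⟩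
      induction e with
      | h a b =>
        have ha : a ∈ s := (hs a).mpr (by rw [hmono a (by simp)]; exact hc)
        have hb : b ∈ s := (hs b).mpr (by rw [hmono b (by simp)]; exact hc)
        refine ⟨s(⟨a, ha⟩, ⟨b, hb⟩), ⟨?_, ⟨⟨(c : ℕ), hc⟩, ?_⟩⟩, rfl⟩
        · exact he
        · intro w hw
          rcases Sym2.mem_iff.mp hw with rfl | rfl
          · ext
            rw [hψ]
            exact congrArg Fin.val (hmono a (Sym2.mem_mk_left a b))
          · ext
            rw [hψ]
            exact congrArg Fin.val (hmono b (Sym2.mem_mk_right a b))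
    · rintro ⟨e', ⟨he', c', hmono'⟩, rfl⟩
      induction e' with
      | h a b =>
        refine ⟨he', ⟨(c' : ℕ), c'.2.trans_le hxy⟩, c'.2, ?_⟩
        intro w hw
        rcases Sym2.mem_iff.mp hw with rfl | rfl
        · ext
          rw [← hψ]
          exact congrArg Fin.val (hmono' a (Sym2.mem_mk_left a b))
        · ext
          rw [← hψ]
          exact congrArg Fin.val (hmono' b (Sym2.mem_mk_right a b))
  unfold badCount monoCount
  rw [hset, Set.ncard_image_of_injective _ hinj]

lemma fiber_sum {V : Type*} [Fintype V] [DecidableEq V] {R : Type*} [CommRing R]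
    (G : SimpleGraph V) (x y : ℕ) (hxy : y ≤ x) (z : R) (W : Finset V) :
    ∑ φ ∈ Finset.univ.filter
        (fun φ : V → Fin x => Finset.univ.filter (fun v => y ≤ (φ v : ℕ)) = W),
      z ^ badCount G y φ
    = (((x - y) ^ W.card : ℕ) : R) *
        badChrom (G.induce ((Wᶜ : Finset V) : Set V)) y z := by
  classical
  have hcard : Fintype.card ((((W : Finset V) : Set V)) : Type _) = W.card := by
    rw [← Nat.card_eq_fintype_card, Nat.card_coe_set_eq, Set.ncard_coe_finset]
  have hprod : (∑ p : ((((Wᶜ : Finset V) : Set V)) → Fin y) ×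
        ((((W : Finset V) : Set V)) → Fin (x - y)),
        z ^ monoCount (G.induce ((Wᶜ : Finset V) : Set V)) p.1)
      = (((x - y) ^ W.card : ℕ) : R) *
        badChrom (G.induce ((Wᶜ : Finset V) : Set V)) y z := by
    rw [Fintype.sum_prod_type]
    simp only [Finset.sum_const, Finset.card_univ]
    rw [Fintype.card_fun, Fintype.card_fin, hcard]
    rw [← Finset.smul_sum, nsmul_eq_mul]
    rfl
  rw [← hprod]
  refine Finset.sum_bij'
    (i := fun φ hφ =>
      ((fun v => ⟨(φ ↑v : ℕ), by
          have h' : ∀ u, u ∈ W ↔ y ≤ (φ u : ℕ) := by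
            intro u
            rw [← (Finset.mem_filter.mp hφ).2]
            simp
          have hv : (v : V) ∉ W := Finset.mem_compl.mp (Finset.mem_coe.mp v.2)
          have := mt (h' (v : V)).mpr hv
          omega⟩),
       (fun v => ⟨(φ ↑v : ℕ) - y, by
          have h' : ∀ u, u ∈ W ↔ y ≤ (φ u : ℕ) := by
            intro u
            rw [← (Finset.mem_filter.mp hφ).2]
            simp
          have hv := (h' (v : V)).mp (Finset.mem_coe.mp v.2)
          have := (φ (v : V)).2
          omega⟩)))
    (j := fun p _ => fun v =>
      if h : v ∈ W then
        ⟨y + (p.2 ⟨v, Finset.mem_coe.mpr h⟩ : ℕ), by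
          have := (p.2 ⟨v, Finset.mem_coe.mpr h⟩).2
          omega⟩
      else
        ⟨(p.1 ⟨v, Finset.mem_coe.mpr (Finset.mem_compl.mpr h)⟩ : ℕ), by
          have := (p.1 ⟨v, Finset.mem_coe.mpr (Finset.mem_compl.mpr h)⟩).2
          omega⟩)
    (fun _ _ => Finset.mem_univ _)
    (fun p _ => by
      simp only [Finset.mem_filter, Finset.mem_univ, true_and]
      ext v
      simp only [Finset.mem_filter, Finset.mem_univ, true_and]
      constructor
      · intro hv
        by_contra hW
        rw [dif_neg hW] at hv
        have := (p.1 ⟨v, Finset.mem_coe.mpr (Finset.mem_compl.mpr hW)⟩).2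
        simp at hv
        omega
      · intro hW
        rw [dif_pos hW]
        simp)
    (fun φ hφ => by
      have h' : ∀ u, u ∈ W ↔ y ≤ (φ u : ℕ) := by
        intro u
        rw [← (Finset.mem_filter.mp hφ).2]
        simp
      funext v
      by_cases hv : v ∈ W
      · have hyv : y ≤ (φ v : ℕ) := (h' v).mp hv
        simp only [dif_pos hv]
        ext
        simp only [Fin.val_mk]
        omega
      · simp only [dif_neg hv])
    (fun p _ => by
      ext v
      · have hv : (v : V) ∉ W := Finset.mem_compl.mp (Finset.mem_coe.mp v.2)
        simp only [dif_neg hv]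
      · have hv : (v : V) ∈ W := Finset.mem_coe.mp v.2
        simp only [dif_pos hv]
        simp)
    (fun φ hφ => by
      congr 1
      refine badCount_eq_monoCount G hxy φ _ ?_ _ (fun v => rfl)
      intro v
      have h' : ∀ u, u ∈ W ↔ y ≤ (φ u : ℕ) := by
        intro u
        rw [← (Finset.mem_filter.mp hφ).2]
        simp
      constructor
      · intro hv
        have hv' : v ∉ W := Finset.mem_compl.mp (Finset.mem_coe.mp hv)
        have := mt (h' v).mpr hv'
        omega
      · intro hv
        refine Finset.mem_coe.mpr (Finset.mem_compl.mpr ?_)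
        rw [h']
        omega)

/-- `P̃(G, x, y, z) = Σ_{W ⊆ V} (x − y)^{|W|} ·
Σ_{A ⊆ E(G − W)} y^{c(A)} (z − 1)^{|A|}`, where `c(A)` is the number of connected
components of the spanning subgraph `(V \\ W, A)`. -/
theorem triChrom_subset_expansion {V : Type*} [Fintype V] [DecidableEq V] {R : Type*}
    [CommRing R] (G : SimpleGraph V) (x y : ℕ) (hxy : y ≤ x) (z : R) :
    triChrom G x y z
      = ∑ W : Finset V, (((x - y) ^ W.card : ℕ) : R) *
          ∑ A ∈ (edgeFinset' (G.induce ((Wᶜ : Finset V) : Set V))).powerset,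
            ((y ^ ncomp (SimpleGraph.fromEdgeSet
                (A : Set (Sym2 ((Wᶜ : Finset V) : Set V)))) : ℕ) : R) *
              (z - 1) ^ A.card := by
  classical
  have hfib : triChrom G x y z = ∑ W : Finset V, ∑ φ ∈ Finset.univ.filter
      (fun φ : V → Fin x => Finset.univ.filter (fun v => y ≤ (φ v : ℕ)) = W),
      z ^ badCount G y φ := by
    rw [triChrom, ← Finset.sum_fiberwise Finset.univ
      (fun φ : V → Fin x => Finset.univ.filter (fun v => y ≤ (φ v : ℕ)))
      (fun φ => z ^ badCount G y φ)]
  rw [hfib]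
  refine Finset.sum_congr rfl (fun W _ => ?_)
  rw [fiber_sum G x y hxy z W, badChrom_eq]
end

section
/- For every finite forest F = (V, E) (a simple graph with no cycles) and all elements v, x of a commutative ring, the subgraph component polynomial is obtained from the subgraph counting polynomial by the substitution Q(F, v, x) = H(F, v, x, 1 − x). -/
open Finset

/-! In a forest every spanning subgraph `(W, A)` of an induced subgraph `F[W]` is again a forest,
so `c(W, A) = |W| - |A| = k(F[W]) + (m - |A|)` with `m = |E(F[W])|`. Hence the inner sum of
`H(F, v, x, 1 - x)` over `A` is `x ^ k(F[W]) * Σ_A (1 - x) ^ |A| * x ^ (m - |A|)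
= x ^ k(F[W]) * ((1 - x) + x) ^ m = x ^ k(F[W])`. The count `c = |V| - |E|` for forests follows by
deleting edges one at a time: each is a bridge, and removing a bridge splits exactly one
component in two. -/

namespace SimpleGraph

variable {V : Type*} {G : SimpleGraph V} {u v : V}

lemma connectedComponentMk_eq_of_reachable_sup_edge {a b : V}
    (h : (G ⊔ edge u v).Reachable a b) (ha : G.connectedComponentMk a ≠ G.connectedComponentMk v)
    (hb : G.connectedComponentMk b ≠ G.connectedComponentMk v) :
    G.connectedComponentMk a = G.connectedComponentMk b := by
  classical
  -- merging the component of `v` into that of `u` is invariant along the edges of `G ⊔ edge u v`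
  let f (x : V) := if G.connectedComponentMk x = G.connectedComponentMk v then
    G.connectedComponentMk u else G.connectedComponentMk x
  have hf : ∀ x y, (G ⊔ edge u v).Adj x y → f x = f y := by
    intro x y hxy
    rcases hxy with hxy | hxy
    · simp only [f, ConnectedComponent.connectedComponentMk_eq_of_adj hxy]
    · obtain ⟨⟨rfl, rfl⟩ | ⟨rfl, rfl⟩, -⟩ := (edge_adj _ _ _ _).mp hxy <;> grind
  have hfab : f a = f b := by
    have hr := (reachable_iff_reflTransGen _ _).mp h
    clear h hb
    induction hr with
    | refl => rfl
    | tail _ hadj ih => exact ih.trans (hf _ _ hadj)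
  simpa only [f, if_neg ha, if_neg hb] using hfab

lemma card_connectedComponent_sup_edge_add_one [Finite V] (h : ¬G.Reachable u v) :
    Nat.card (G ⊔ edge u v).ConnectedComponent + 1 = Nat.card G.ConnectedComponent := by
  have hle : G ≤ G ⊔ edge u v := le_sup_left
  set π := ConnectedComponent.map (Hom.ofLE hle)
  have huv : G.connectedComponentMk u ≠ G.connectedComponentMk v :=
    fun huv => h (ConnectedComponent.exact huv)
  have hπuv : π (G.connectedComponentMk v) = π (G.connectedComponentMk u) := by
    have hne : v ≠ u := fun hvu => h (hvu ▸ .rfl)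
    exact ConnectedComponent.connectedComponentMk_eq_of_adj (by simp [edge_adj, hne])
  have hbij : Function.Bijective
      (fun c : {c : G.ConnectedComponent // c ≠ G.connectedComponentMk v} => π c) := by
    refine ⟨fun ⟨c, hc⟩ ⟨d, hd⟩ hcd => ?_, fun c => ?_⟩
    · induction c using ConnectedComponent.ind
      induction d using ConnectedComponent.ind
      exact Subtype.ext <|
        connectedComponentMk_eq_of_reachable_sup_edge (ConnectedComponent.exact hcd) hc hd
    · obtain ⟨c, rfl⟩ := ConnectedComponent.surjective_map_ofLE hle c
      by_cases hc : c = G.connectedComponentMk v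
      · exact ⟨⟨_, huv⟩, hc ▸ hπuv.symm⟩
      · exact ⟨⟨c, hc⟩, rfl⟩
  have := Fintype.ofFinite G.ConnectedComponent
  classical
  rw [← Nat.card_eq_of_bijective _ hbij]
  simp only [Nat.card_eq_fintype_card, Fintype.card_subtype_compl, Fintype.card_unique]
  have hpos := Fintype.card_pos_iff.mpr ⟨G.connectedComponentMk v⟩
  omega

lemma card_connectedComponent_bot :
    Nat.card (⊥ : SimpleGraph V).ConnectedComponent = Nat.card V := by
  refine (Nat.card_eq_of_bijective _ ⟨fun a b hab => ?_, Quot.mk_surjective⟩).symm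
  exact reachable_bot.mp (ConnectedComponent.exact hab)

lemma sup_edge_deleteEdges_of_adj (h : G.Adj u v) : G.deleteEdges {s(u, v)} ⊔ edge u v = G := by
  ext a b
  simp only [sup_adj, deleteEdges_adj, edge_adj, Set.mem_singleton_iff, Sym2.eq_iff]
  grind [G.ne_of_adj, G.adj_symm]

lemma IsAcyclic.card_connectedComponent_add_ncard_edgeSet [Finite V] (hG : G.IsAcyclic) :
    Nat.card G.ConnectedComponent + G.edgeSet.ncard = Nat.card V := by
  induction hn : G.edgeSet.ncard generalizing G with
  | zero =>
    obtain rfl : G = ⊥ := by rwa [Set.ncard_eq_zero, edgeSet_eq_empty] at hn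
    simpa using card_connectedComponent_bot
  | succ n ih =>
    obtain ⟨e, he⟩ := Set.nonempty_of_ncard_ne_zero (by omega : G.edgeSet.ncard ≠ 0)
    induction e with | h u v
    have hsplit := card_connectedComponent_sup_edge_add_one
      (isBridge_iff.mp (isAcyclic_iff_forall_isBridge.mp hG he))
    rw [sup_edge_deleteEdges_of_adj he] at hsplit
    have hdel : (G.deleteEdges {s(u, v)}).edgeSet.ncard = n := by
      rw [edgeSet_deleteEdges, Set.ncard_sdiff_singleton_of_mem he, hn, Nat.add_sub_cancel]
    have hrest := ih (hG.anti (deleteEdges_le _)) hdel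
    omega

end SimpleGraph

open SimpleGraph

lemma mem_edgeFinset' {α : Type*} [Fintype α] {G : SimpleGraph α} {e : Sym2 α} :
    e ∈ edgeFinset' G ↔ e ∈ G.edgeSet :=
  Set.Finite.mem_toFinset _

lemma ncomp_add_card_edgeFinset'_of_isAcyclic {α : Type*} [Fintype α] {G : SimpleGraph α}
    (hG : G.IsAcyclic) : ncomp G + (edgeFinset' G).card = Fintype.card α := by
  rw [ncomp, edgeFinset', ← Set.ncard_eq_toFinset_card, ← Nat.card_eq_fintype_card]
  exact hG.card_connectedComponent_add_ncard_edgeSet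

lemma edgeFinset'_fromEdgeSet {α : Type*} [Fintype α] {G : SimpleGraph α} {A : Finset (Sym2 α)}
    (hA : (A : Set (Sym2 α)) ⊆ G.edgeSet) : edgeFinset' (fromEdgeSet (A : Set (Sym2 α))) = A := by
  ext e
  rw [mem_edgeFinset', edgeSet_fromEdgeSet, Set.mem_sdiff, Sym2.mem_diagSet, Finset.mem_coe]
  exact ⟨And.left, fun he => ⟨he, G.not_isDiag_of_mem_edgeSet (hA he)⟩⟩

theorem potts_one_sub_of_isAcyclic {α : Type*} [Fintype α] {R : Type*} [CommRing R]
    {G : SimpleGraph α} (hG : G.IsAcyclic) (x : R) : potts G x (1 - x) = x ^ ncomp G := by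
  set m := (edgeFinset' G).card
  have hcount : ∀ A ∈ (edgeFinset' G).powerset,
      ncomp (fromEdgeSet (A : Set (Sym2 α))) = ncomp G + (m - A.card) := by
    intro A hA
    rw [Finset.mem_powerset] at hA
    have hAG : (A : Set (Sym2 α)) ⊆ G.edgeSet := fun e he => mem_edgeFinset'.mp (hA he)
    have hle : fromEdgeSet (A : Set (Sym2 α)) ≤ G := (fromEdgeSet_le G).mpr fun e he => hAG he.1
    have hA' := ncomp_add_card_edgeFinset'_of_isAcyclic (hG.anti hle)
    rw [edgeFinset'_fromEdgeSet hAG] at hA'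
    have hG' := ncomp_add_card_edgeFinset'_of_isAcyclic hG
    have hAm := Finset.card_le_card hA
    omega
  calc potts G x (1 - x)
      = ∑ A ∈ (edgeFinset' G).powerset, x ^ ncomp G * ((1 - x) ^ A.card * x ^ (m - A.card)) :=
        Finset.sum_congr rfl fun A hA => by rw [hcount A hA, pow_add]; ring
    _ = x ^ ncomp G := by rw [← Finset.mul_sum, Finset.sum_pow_mul_eq_add_pow]; simp

lemma scp_eq_sum_potts {α : Type*} [Fintype α] {R : Type*} [CommRing R] (G : SimpleGraph α)
    (v x y : R) : scp G v x y = ∑ W : Finset α, v ^ W.card * potts (G.induce (W : Set α)) x y := by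
  simp only [scp, potts, Finset.mul_sum, mul_assoc]

/-- For a forest `F`, the subgraph component polynomial is obtained from
the subgraph counting polynomial: `Q(F, v, x) = H(F, v, x, 1 − x)`. -/
theorem subgraphCompPoly_eq_scp_of_isAcyclic {V : Type*} [Fintype V] {R : Type*}
    [CommRing R] (F : SimpleGraph V) (hF : F.IsAcyclic) (v x : R) :
    subgraphCompPoly F v x = scp F v x (1 - x) := by
  simp only [subgraphCompPoly, scp_eq_sum_potts, potts_one_sub_of_isAcyclic (hF.induce _)]
end

section
/- For every finite forest F = (V, E) (a simple graph with no cycles) and all elements x, y of a commutative ring, the Potts model depends only on the number of vertices and connected components: Z(F, x, y) = x^{k(F)} · (x + y)^{|V| − k(F)}, where k(F) is the number of connected components of F. -/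
open Finset

/-!
Adding an edge between two vertices in different components merges exactly those two
components, so by induction on the number of edges a forest with `n` vertices and `m` edges has
`n - m` components. Every edge set `A ⊆ E` of a forest `F` spans a forest, hence
`c(V, A) = k(F) + (|E| - |A|)`, and the binomial theorem turns the Potts sum into
`x^{k(F)} (x + y)^{|E|}` with `|E| = |V| - k(F)`.
-/

namespace SimpleGraph

variable {V : Type*} {G : SimpleGraph V} {u v : V}

lemma Reachable.of_sup_edge {a b : V} (h : (G ⊔ edge u v).Reachable a b) :
    G.Reachable a b ∨ (G.Reachable a u ∧ G.Reachable v b) ∨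
      (G.Reachable a v ∧ G.Reachable u b) := by
  obtain ⟨p⟩ := h
  induction p with
  | nil => exact .inl .rfl
  | @cons a c b hac _ ih =>
    rcases (sup_adj _ _ _ _).mp hac with hac | hac
    · have hac := hac.reachable
      rcases ih with h | ⟨h₁, h₂⟩ | ⟨h₁, h₂⟩
      · exact .inl (hac.trans h)
      · exact .inr (.inl ⟨hac.trans h₁, h₂⟩)
      · exact .inr (.inr ⟨hac.trans h₁, h₂⟩)
    · obtain ⟨⟨rfl, rfl⟩ | ⟨rfl, rfl⟩, -⟩ := (edge_adj _ _ _ _).mp hac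
      · rcases ih with h | ⟨-, h⟩ | ⟨-, h⟩
        · exact .inr (.inl ⟨.rfl, h⟩)
        · exact .inr (.inl ⟨.rfl, h⟩)
        · exact .inl h
      · rcases ih with h | ⟨-, h⟩ | ⟨-, h⟩
        · exact .inr (.inr ⟨.rfl, h⟩)
        · exact .inl h
        · exact .inr (.inr ⟨.rfl, h⟩)

theorem IsAcyclic.card_connectedComponent_add_card_edgeSet [Finite V] (hG : G.IsAcyclic) :
    Nat.card G.ConnectedComponent + Nat.card G.edgeSet = Nat.card V := by
  induction hn : Nat.card G.edgeSet generalizing G with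
  | zero =>
    obtain rfl : G = ⊥ := edgeSet_eq_empty.mp ((Set.ncard_eq_zero).mp hn)
    exact card_connectedComponent_bot
  | succ n ih =>
    obtain ⟨e, he⟩ : G.edgeSet.Nonempty := by
      rw [← Set.ncard_pos, ← Nat.card_coe_set_eq, hn]
      exact n.succ_pos
    induction e with | h u v => ?_
    have huv : u ≠ v := G.ne_of_adj he
    have hadj_edge : (edge u v).Adj u v := (edge_adj _ _ _ _).mpr ⟨.inl ⟨rfl, rfl⟩, huv⟩
    set G' := G \ edge u v
    have hG' : G' ⊔ edge u v = G := sdiff_sup_cancel ((edge_le_iff G).mpr (.inr he))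
    have hn' : Nat.card G'.edgeSet = n := by
      rw [Nat.card_coe_set_eq, edgeSet_sdiff, edgeSet_edge_of_ne huv, ← Nat.add_right_cancel_iff,
        Set.ncard_sdiff_singleton_add_one he, ← Nat.card_coe_set_eq, hn]
    obtain ⟨hG'_acyclic, hG'_reach⟩ := isAcyclic_sup_fromEdgeSet_iff.mp (hG'.symm ▸ hG)
    have hG'_not_reach : ¬G'.Reachable u v := fun h =>
      (hG'_reach h).elim huv fun h => ((sdiff_adj _ _ _ _).mp h).2 hadj_edge
    have hcard := card_connectedComponent_sup_edge_add_one hG'_not_reach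
    rw [hG'] at hcard
    have hG'_count := ih hG'_acyclic hn'
    omega

lemma edgeSet_fromEdgeSet_of_subset {s : Set (Sym2 V)} (h : s ⊆ G.edgeSet) :
    (fromEdgeSet s).edgeSet = s := by
  rw [edgeSet_fromEdgeSet, sdiff_eq_left]
  exact Set.disjoint_left.mpr fun _ he => G.not_isDiag_of_mem_edgeSet (h he)

end SimpleGraph

open SimpleGraph

lemma ncomp_fromEdgeSet_add_card {V : Type*} [Fintype V] {F : SimpleGraph V} (hF : F.IsAcyclic)
    {A : Finset (Sym2 V)} (hA : (A : Set (Sym2 V)) ⊆ F.edgeSet) :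
    ncomp (fromEdgeSet (A : Set (Sym2 V))) + #A = Fintype.card V := by
  have := (hF.anti ((fromEdgeSet_mono hA).trans_eq F.fromEdgeSet_edgeSet)
    ).card_connectedComponent_add_card_edgeSet
  rwa [edgeSet_fromEdgeSet_of_subset hA, Nat.card_coe_set_eq, Set.ncard_coe_finset,
    Nat.card_eq_fintype_card (α := V)] at this

/-- For a forest `F`,
`Z(F, x, y) = x^{k(F)} · (x + y)^{|V| − k(F)}`. -/
theorem potts_of_isAcyclic {V : Type*} [Fintype V] {R : Type*} [CommRing R]
    (F : SimpleGraph V) (hF : F.IsAcyclic) (x y : R) :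
    potts F x y = x ^ ncomp F * (x + y) ^ (Fintype.card V - ncomp F) := by
  set E := edgeFinset' F
  have hE : (E : Set (Sym2 V)) = F.edgeSet := Set.Finite.coe_toFinset _
  have hcount (A : Finset (Sym2 V)) (hA : A ⊆ E) :=
    ncomp_fromEdgeSet_add_card hF (hE ▸ coe_subset.mpr hA)
  have hk : ncomp F + #E = Fintype.card V := by
    simpa only [hE, fromEdgeSet_edgeSet] using hcount E subset_rfl
  rw [show Fintype.card V - ncomp F = #E by omega, add_comm, ← sum_pow_mul_eq_add_pow, mul_sum]
  refine sum_congr rfl fun A hA => ?_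
  have hAE := mem_powerset.mp hA
  have hA_count := hcount A hAE
  have hA_le := card_le_card hAE
  rw [show ncomp (fromEdgeSet (A : Set (Sym2 V))) = ncomp F + (#E - #A) by omega, pow_add]
  ring
end

section
/- For every finite simple graph G = (V, E), every natural number t, and every element z of a commutative ring, the trivariate chromatic polynomial satisfies P̃(G, t + 1, 1, z) = Σ_{W ⊆ V} t^{|W|} · z^{|E(G − W)|}, where G − W is the subgraph of G induced by V \ W, |E(G − W)| is its number of edges, and the natural number t^{|W|} is cast into the ring. -/
open Finset

private lemma badCount_eq_card {V : Type*} [Fintype V] (G : SimpleGraph V) {t : ℕ} (φ : V → Fin (t+1))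
    (S : Set V) [Fintype S] (h : ∀ v, φ v = 0 ↔ v ∈ S) :
    badCount G 1 φ = (edgeFinset' (G.induce S)).card := by
  unfold badCount edgeFinset'
  have himg : {e ∈ G.edgeSet | ∃ c : Fin (t+1), (c : ℕ) < 1 ∧ ∀ w ∈ e, φ w = c}
      = Sym2.map (Subtype.val : S → V) '' (G.induce S).edgeSet := by
    ext e
    induction e using Sym2.ind with
    | _ a b =>
      simp only [Set.mem_setOf_eq, SimpleGraph.mem_edgeSet, Set.mem_image, Sym2.mem_iff]
      constructor
      · rintro ⟨hab, c, hc, hmono⟩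
        have hc0 : c = 0 := by
          apply Fin.ext; simpa using Nat.lt_one_iff.mp hc
        subst hc0
        have ha : a ∈ S := (h a).mp (hmono a (Or.inl rfl))
        have hb : b ∈ S := (h b).mp (hmono b (Or.inr rfl))
        exact ⟨s(⟨a, ha⟩, ⟨b, hb⟩), by simpa using hab, by simp⟩
      · rintro ⟨e', he', heq⟩
        induction e' using Sym2.ind with
        | _ u v =>
          simp only [Sym2.map_pair_eq, Sym2.eq_iff] at heq
          have hadj : G.Adj u v := he'
          refine ⟨?_, 0, by simp, ?_⟩
          · rcases heq with ⟨h1, h2⟩ | ⟨h1, h2⟩ <;> subst h1 <;> subst h2 <;>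
              [exact hadj; exact hadj.symm]
          · intro w hw
            rw [h w]
            rcases heq with ⟨h1, h2⟩ | ⟨h1, h2⟩ <;> rcases hw with rfl | rfl <;>
              first
              | (rw [← h1]; exact u.2)
              | (rw [← h2]; exact v.2)
  rw [himg, Set.ncard_image_of_injective _ (Sym2.map.injective Subtype.val_injective),
    Set.ncard_eq_toFinset_card]

private lemma fiber_card {V : Type*} [Fintype V] [DecidableEq V] (t : ℕ) (W : Finset V) :
    (univ.filter (fun φ : V → Fin (t+1) => univ.filter (fun v => φ v ≠ 0) = W)).card
      = t ^ W.card := by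
  rw [← Fintype.card_subtype]
  have e : {φ : V → Fin (t+1) // univ.filter (fun v => φ v ≠ 0) = W} ≃ (W → Fin t) :=
    { toFun := fun φ v => (φ.1 v.1).pred (by
        have hv : (v : V) ∈ filter (fun v => φ.1 v ≠ 0) univ := by
          rw [φ.2]; exact v.2
        simpa using hv)
      invFun := fun ψ => ⟨fun v => if h : v ∈ W then (ψ ⟨v, h⟩).succ else 0, by
        ext v
        by_cases h : v ∈ W <;> simp [h, Fin.succ_ne_zero]⟩
      left_inv := fun φ => by
        apply Subtype.ext
        funext v
        by_cases h : v ∈ W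
        · simp [h, Fin.succ_pred]
        · have hv : v ∉ filter (fun v => φ.1 v ≠ 0) univ := by
            rw [φ.2]; exact h
          simp only [mem_filter, mem_univ, true_and, not_not] at hv
          simp [h, hv]
      right_inv := fun ψ => by
        funext v
        simp [v.2, Fin.pred_succ] }
  rw [Fintype.card_congr e, Fintype.card_fun, Fintype.card_fin, Fintype.card_coe]


/-- `P̃(G, t + 1, 1, z) = Σ_{W ⊆ V} t^{|W|} · z^{|E(G − W)|}`. -/
theorem triChrom_succ_one {V : Type*} [Fintype V] [DecidableEq V] {R : Type*}
    [CommRing R] (G : SimpleGraph V) (t : ℕ) (z : R) :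
    triChrom G (t + 1) 1 z
      = ∑ W : Finset V, ((t ^ W.card : ℕ) : R) *
          z ^ (edgeFinset' (G.induce ((Wᶜ : Finset V) : Set V))).card := by
  classical
  unfold triChrom
  rw [← Finset.sum_fiberwise univ (fun φ : V → Fin (t+1) => univ.filter (fun v => φ v ≠ 0))
    (fun φ => z ^ badCount G 1 φ)]
  refine Finset.sum_congr rfl fun W _ => ?_
  have hstep : ∀ φ ∈ univ.filter
      (fun φ : V → Fin (t+1) => univ.filter (fun v => φ v ≠ 0) = W),
      z ^ badCount G 1 φ
        = z ^ (edgeFinset' (G.induce ((Wᶜ : Finset V) : Set V))).card := by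
    intro φ hφ
    rw [mem_filter] at hφ
    congr 1
    apply badCount_eq_card
    intro v
    rw [Finset.mem_coe, Finset.mem_compl, ← hφ.2, mem_filter]
    simp
  rw [Finset.sum_congr rfl hstep, Finset.sum_const, fiber_card, nsmul_eq_mul]
end

section
/- For every finite simple graph G = (V, E), all natural numbers x, and every element z of a commutative ring, the bad coloring polynomial has the edge subset expansion χ̃(G, x, z) = Σ_{A ⊆ E} x^{c(V,A)} (z − 1)^{|A|}, where c(V,A) is the number of connected components of the spanning subgraph (V, A) and the natural number x^{c(V,A)} is cast into the ring; equivalently, χ̃(G, x, z) = Z(G, x, z − 1). -/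
open Finset

private lemma pow_card_expand {R : Type*} [CommRing R] {ι : Type*} [DecidableEq ι]
    (s : Finset ι) (z : R) :
    z ^ s.card = ∑ A ∈ s.powerset, (z - 1) ^ A.card := by
  have h := Finset.prod_add (fun _ : ι => z - 1) (fun _ : ι => (1 : R)) s
  simp only [sub_add_cancel, Finset.prod_const, one_pow, mul_one] at h
  exact h

private lemma card_constant_colorings {V : Type*} [Fintype V] [DecidableEq V]
    (A : Finset (Sym2 V)) (hA : ∀ e ∈ A, ¬ e.IsDiag) (x : ℕ) :
    (Finset.univ.filter
        (fun φ : V → Fin x => ∀ e ∈ A, ∃ c : Fin x, ∀ w ∈ e, φ w = c)).card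
      = x ^ ncomp (SimpleGraph.fromEdgeSet (A : Set (Sym2 V))) := by
  classical
  set H := SimpleGraph.fromEdgeSet (A : Set (Sym2 V)) with hH
  have key : ∀ φ : V → Fin x,
      (∀ e ∈ A, ∃ c : Fin x, ∀ w ∈ e, φ w = c) ↔
        ∀ v w, H.Reachable v w → φ v = φ w := by
    intro φ
    constructor
    · intro h v w hr
      obtain ⟨p⟩ := hr
      induction p with
      | nil => rfl
      | cons hadj p ih =>
        rename_i u v' w'
        have hm : s(u, v') ∈ (A : Set (Sym2 V)) := ((SimpleGraph.fromEdgeSet_adj _).mp hadj).1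
        obtain ⟨c, hc⟩ := h _ hm
        have h1 : φ u = c := hc u (Sym2.mem_mk_left u v')
        have h2 : φ v' = c := hc v' (Sym2.mem_mk_right u v')
        rw [h1, ← h2]; exact ih
    · intro h e he
      induction e using Sym2.ind with
      | _ a b =>
        have hne : a ≠ b := by
          intro hab; exact hA _ he (by simp [hab])
        have hadj : H.Adj a b := (SimpleGraph.fromEdgeSet_adj _).mpr ⟨he, hne⟩
        refine ⟨φ a, fun w hw => ?_⟩
        rcases Sym2.mem_iff.mp hw with h1 | h1
        · rw [h1]
        · rw [h1]; exact (h a b hadj.reachable).symm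
  have e1 : {φ : V → Fin x // ∀ v w, H.Reachable v w → φ v = φ w}
      ≃ (H.ConnectedComponent → Fin x) :=
    { toFun := fun φ => SimpleGraph.ConnectedComponent.lift φ.1
        (fun v w p _ => φ.2 v w ⟨p⟩)
      invFun := fun g => ⟨fun v => g (H.connectedComponentMk v),
        fun v w hr => by simp only []; rw [SimpleGraph.ConnectedComponent.sound hr]⟩
      left_inv := fun φ => Subtype.ext rfl
      right_inv := fun g => funext fun c => by
        induction c using SimpleGraph.ConnectedComponent.ind
        rfl }
  calc (Finset.univ.filter
        (fun φ : V → Fin x => ∀ e ∈ A, ∃ c : Fin x, ∀ w ∈ e, φ w = c)).card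
      = Fintype.card {φ : V → Fin x // ∀ v w, H.Reachable v w → φ v = φ w} := by
        rw [Fintype.card_subtype]
        congr 1
        exact Finset.filter_congr fun φ _ => by simpa using key φ
    _ = Nat.card {φ : V → Fin x // ∀ v w, H.Reachable v w → φ v = φ w} :=
        (Nat.card_eq_fintype_card).symm
    _ = Nat.card (H.ConnectedComponent → Fin x) := Nat.card_congr e1
    _ = x ^ ncomp H := by
        rw [Nat.card_fun, Nat.card_eq_fintype_card (α := Fin x), Fintype.card_fin]
        rfl

/-- Edge subset expansion of the bad coloring polynomial:
`χ̃(G, x, z) = Σ_{A ⊆ E} x^{c(V,A)} (z − 1)^{|A|}`; equivalently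
`χ̃(G, x, z) = Z(G, x, z − 1)`. -/
theorem badChrom_subset_expansion {V : Type*} [Fintype V] [DecidableEq V] {R : Type*}
    [CommRing R] (G : SimpleGraph V) (x : ℕ) (z : R) :
    badChrom G x z
        = ∑ A ∈ (edgeFinset' G).powerset,
            ((x ^ ncomp (SimpleGraph.fromEdgeSet (A : Set (Sym2 V))) : ℕ) : R) *
              (z - 1) ^ A.card
      ∧ badChrom G x z = potts G (x : R) (z - 1) := by
  
  classical
  have hmem : ∀ e, e ∈ edgeFinset' G ↔ e ∈ G.edgeSet := fun e =>
    Set.Finite.mem_toFinset _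
  set M : (V → Fin x) → Finset (Sym2 V) :=
    fun φ => (edgeFinset' G).filter (fun e => ∃ c : Fin x, ∀ w ∈ e, φ w = c) with hM
  have hmono : ∀ φ : V → Fin x, monoCount G φ = (M φ).card := by
    intro φ
    have hset : {e ∈ G.edgeSet | ∃ c : Fin x, ∀ w ∈ e, φ w = c} = ↑(M φ) := by
      ext e
      simp only [hM, Set.mem_setOf_eq, Finset.coe_filter, hmem e]
    rw [monoCount, hset, Set.ncard_coe_finset]
  have main : badChrom G x z
      = ∑ A ∈ (edgeFinset' G).powerset,
          ((x ^ ncomp (SimpleGraph.fromEdgeSet (A : Set (Sym2 V))) : ℕ) : R) *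
            (z - 1) ^ A.card := by
    calc badChrom G x z = ∑ φ : V → Fin x, z ^ (M φ).card := by
          rw [badChrom]
          exact Finset.sum_congr rfl fun φ _ => by rw [hmono]
      _ = ∑ φ : V → Fin x, ∑ A ∈ (M φ).powerset, (z - 1) ^ A.card :=
          Finset.sum_congr rfl fun φ _ => pow_card_expand _ _
      _ = ∑ φ : V → Fin x, ∑ A ∈ (edgeFinset' G).powerset,
            if A ⊆ M φ then (z - 1) ^ A.card else 0 := by
          refine Finset.sum_congr rfl fun φ _ => ?_
          rw [← Finset.sum_filter]
          congr 1
          ext A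
          simp only [Finset.mem_powerset, Finset.mem_filter]
          exact ⟨fun h => ⟨h.trans (Finset.filter_subset _ _), h⟩, fun h => h.2⟩
      _ = ∑ A ∈ (edgeFinset' G).powerset, ∑ φ : V → Fin x,
            if A ⊆ M φ then (z - 1) ^ A.card else 0 := Finset.sum_comm
      _ = ∑ A ∈ (edgeFinset' G).powerset,
            (Finset.univ.filter (fun φ : V → Fin x => A ⊆ M φ)).card • (z - 1) ^ A.card := by
          refine Finset.sum_congr rfl fun A _ => ?_
          rw [← Finset.sum_filter, Finset.sum_const]
      _ = ∑ A ∈ (edgeFinset' G).powerset,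
            ((x ^ ncomp (SimpleGraph.fromEdgeSet (A : Set (Sym2 V))) : ℕ) : R) *
              (z - 1) ^ A.card := by
          refine Finset.sum_congr rfl fun A hAp => ?_
          rw [Finset.mem_powerset] at hAp
          have hd : ∀ e ∈ A, ¬ e.IsDiag := fun e he =>
            G.not_isDiag_of_mem_edgeSet ((hmem e).mp (hAp he))
          have hfeq : Finset.univ.filter (fun φ : V → Fin x => A ⊆ M φ)
              = Finset.univ.filter
                  (fun φ : V → Fin x => ∀ e ∈ A, ∃ c : Fin x, ∀ w ∈ e, φ w = c) := by
            refine Finset.filter_congr fun φ _ => ?_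
            constructor
            · intro h e he
              exact (Finset.mem_filter.mp (h he)).2
            · intro h e he
              exact Finset.mem_filter.mpr ⟨hAp he, h e he⟩
          rw [hfeq, card_constant_colorings A hd x, nsmul_eq_mul]
  refine ⟨main, ?_⟩
  rw [main, potts]
  exact Finset.sum_congr rfl fun A _ => by rw [Nat.cast_pow]
end
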